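/- arXiv:0904.3050 — 6 statements merged into one kernel-verified Lean document; each statement's English description precedes it below -/
import Mathlib

section
/- Let G be a connected graph (possibly with loops) and let x be a nonzero configuration of G. Suppose a and b are vertices with N_G(a) ≠ N_G(b). Then there exists a configuration y with y(a) ≠ y(b) such that x can be transformed to y by a sequence of valid lit-only moves. -/
structure LoopGraph (V : Type) [Fintype V] [DecidableEq V] where
  N : V → Finset V
  symm : ∀ u v, u ∈ N v ↔ v ∈ N u

namespace LoopGraph

variable {V : Type} [Fintype V] [DecidableEq V]

/-- Indicator vector of a finite set of vertices, as a configuration over `F_2`. -/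
def chi (S : Finset V) : V → ZMod 2 := fun u => if u ∈ S then 1 else 0

/-- One regular move of the sigma-game. -/
def RegStep (G : LoopGraph V) (x y : V → ZMod 2) : Prop :=
  ∃ v, y = x + chi (G.N v)

/-- One valid move of the lit-only sigma-game. -/
def ValidStep (G : LoopGraph V) (x y : V → ZMod 2) : Prop :=
  ∃ v, x v = 1 ∧ y = x + chi (G.N v)

def RegReach (G : LoopGraph V) : (V → ZMod 2) → (V → ZMod 2) → Prop :=
  Relation.ReflTransGen G.RegStep

def ValidReach (G : LoopGraph V) : (V → ZMod 2) → (V → ZMod 2) → Prop :=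
  Relation.ReflTransGen G.ValidStep

/-- The light number of a configuration. -/
def L (x : V → ZMod 2) : ℕ := (Finset.univ.filter fun v => x v = 1).card

/-- Minimum light number of a configuration for the sigma-game. -/
noncomputable def ML (G : LoopGraph V) (x : V → ZMod 2) : ℕ :=
  sInf (L '' {y | G.RegReach x y})

/-- Minimum light number of a configuration for the lit-only sigma-game. -/
noncomputable def MLs (G : LoopGraph V) (x : V → ZMod 2) : ℕ :=
  sInf (L '' {y | G.ValidReach x y})

/-- Minimum light number of the sigma-game on `G`. -/
noncomputable def MLmax (G : LoopGraph V) : ℕ := ⨆ x, G.ML x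

/-- Minimum light number of the lit-only sigma-game on `G`. -/
noncomputable def MLsmax (G : LoopGraph V) : ℕ := ⨆ x, G.MLs x

/-- Non-loop adjacency. -/
def Adj (G : LoopGraph V) (u w : V) : Prop := u ≠ w ∧ w ∈ G.N u

def Connected (G : LoopGraph V) : Prop :=
  ∀ u w : V, Relation.ReflTransGen G.Adj u w

/-- Degree, counting non-loop edges only. -/
def deg (G : LoopGraph V) (v : V) : ℕ := ((G.N v).erase v).card

/-- Underlying simple graph (loops discarded). -/
def simple (G : LoopGraph V) : SimpleGraph V where
  Adj := G.Adj
  symm := by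
    constructor
    intro u w h
    exact ⟨h.1.symm, (G.symm w u).mp h.2⟩
  loopless := by constructor; intro u h; exact h.1 rfl

/-- Induced subgraph on a finite vertex subset. -/
def induce (G : LoopGraph V) (T : Finset V) : LoopGraph {u // u ∈ T} where
  N u := Finset.univ.filter fun w => w.val ∈ G.N u.val
  symm := by
    intro u w
    simp only [Finset.mem_filter, Finset.mem_univ, true_and]
    exact G.symm u.1 w.1

end LoopGraph


/-! A lit vertex can be handed on along any path: if the next vertex is off, pressing the
current lit vertex switches it on. Once some vertex `c` with `c ∈ N a` xor `c ∈ N b` is lit,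
either `a` and `b` already differ, or pressing `c` separates them. -/

namespace LoopGraph

lemma chi_add_apply_ne {V : Type} [DecidableEq V] {S : Finset V} {a b : V}
    (hS : ¬(a ∈ S ↔ b ∈ S)) {y : V → ZMod 2} (hy : y a = y b) : (y + chi S) a ≠ (y + chi S) b := by
  by_cases ha : a ∈ S <;> by_cases hb : b ∈ S <;> simp_all [chi]

variable {V : Type} [Fintype V] [DecidableEq V]

lemma exists_mem_neighbors_xor {G : LoopGraph V} {a b : V} (hab : G.N a ≠ G.N b) :
    ∃ c, ¬(a ∈ G.N c ↔ b ∈ G.N c) := by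
  obtain ⟨c, hc⟩ := not_forall.mp (mt Finset.ext hab)
  exact ⟨c, by rwa [G.symm a c, G.symm b c]⟩

lemma exists_validReach_apply_eq_one (G : LoopGraph V) {v c : V}
    (hvc : Relation.ReflTransGen G.Adj v c) {x : V → ZMod 2} (hx : x v = 1) :
    ∃ y, G.ValidReach x y ∧ y c = 1 := by
  induction hvc using Relation.ReflTransGen.head_induction_on generalizing x with
  | refl => exact ⟨x, .refl, hx⟩
  | @head v w hvw _ ih =>
    by_cases hw : x w = 1
    · exact ih hw
    · have hw0 : x w = 0 := by_contra fun h => hw (Fin.eq_one_of_ne_zero _ h)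
      have hw' : (x + chi (G.N v)) w = 1 := by simp [chi, hvw.2, hw0]
      obtain ⟨y, hy, hyc⟩ := ih hw'
      exact ⟨y, .head ⟨v, hx, rfl⟩ hy, hyc⟩

lemma exists_validReach_apply_ne_of_apply_eq_one (G : LoopGraph V) {x y : V → ZMod 2}
    (hxy : G.ValidReach x y) {a b c : V} (hc : ¬(a ∈ G.N c ↔ b ∈ G.N c)) (hyc : y c = 1) :
    ∃ z : V → ZMod 2, z a ≠ z b ∧ G.ValidReach x z := by
  by_cases hy : y a = y b
  · exact ⟨_, chi_add_apply_ne hc hy, hxy.tail ⟨c, hyc, rfl⟩⟩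
  · exact ⟨y, hy, hxy⟩

end LoopGraph

open LoopGraph in
theorem exists_reachable_with_different_states
    {V : Type} [Fintype V] [DecidableEq V] (G : LoopGraph V)
    (hconn : G.Connected)
    (x : V → ZMod 2) (hx : x ≠ 0)
    (a b : V) (hab : G.N a ≠ G.N b) :
    ∃ y : V → ZMod 2, y a ≠ y b ∧ G.ValidReach x y := by
  obtain ⟨c, hc⟩ := exists_mem_neighbors_xor hab
  obtain ⟨v, hv⟩ := Function.ne_iff.mp hx
  obtain ⟨y, hxy, hyc⟩ :=
    G.exists_validReach_apply_eq_one (hconn v c) (Fin.eq_one_of_ne_zero (x v) hv)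
  exact G.exists_validReach_apply_ne_of_apply_eq_one hxy hc hyc
end

section
/- Let G be obtained from a path v_1 v_2 ⋯ v_n by adding loops at some subset of vertices. Then any configuration x of G can be transformed, by a sequence of valid lit-only moves all performed at vertices in {v_2, …, v_n}, to a configuration with light number at most one. -/
namespace LoopGraph

variable {n : ℕ}

def IsPathWithLoops (G : LoopGraph (Fin n)) : Prop :=
  ∀ i j : Fin n, i ≠ j → (j ∈ G.N i ↔ (i.val + 1 = j.val ∨ j.val + 1 = i.val))

def LitMoveFrom (G : LoopGraph (Fin n)) (t : ℕ) (a b : Fin n → ZMod 2) : Prop :=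
  ∃ v : Fin n, t ≤ v.val ∧ a v = 1 ∧ b = a + chi (G.N v)

theorem zmod_two_eq_zero_of_ne_one : ∀ a : ZMod 2, a ≠ 1 → a = 0 := by decide

theorem L_le_one_of_lit_eq {V : Type} [Fintype V] [DecidableEq V] {x : V → ZMod 2}
    (h : ∀ a b, x a = 1 → x b = 1 → a = b) : L x ≤ 1 :=
  Finset.card_le_one.mpr fun a ha b hb =>
    h a b (Finset.mem_filter.mp ha).2 (Finset.mem_filter.mp hb).2

section Path

variable {G : LoopGraph (Fin n)}

theorem reflTransGen_litMoveFrom_mono {t t' : ℕ} (h : t ≤ t') {x y : Fin n → ZMod 2}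
    (hxy : Relation.ReflTransGen (LitMoveFrom G t') x y) :
    Relation.ReflTransGen (LitMoveFrom G t) x y :=
  Relation.ReflTransGen.mono (fun _ _ ⟨v, hv, hav, hb⟩ => ⟨v, h.trans hv, hav, hb⟩) _ _ hxy

theorem IsPathWithLoops.chi_N_of_succ_eq (hG : G.IsPathWithLoops) {u v : Fin n}
    (h : u.val + 1 = v.val) : chi (G.N v) u = 1 := by
  have hvu : v ≠ u := by rintro rfl; omega
  simp [chi, (hG v u hvu).mpr (Or.inr h)]

theorem IsPathWithLoops.chi_N_of_succ_lt (hG : G.IsPathWithLoops) {u v : Fin n}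
    (h : u.val + 1 < v.val) : chi (G.N v) u = 0 := by
  have hvu : v ≠ u := by rintro rfl; omega
  simp only [chi, ite_eq_right_iff, one_ne_zero, imp_false]
  rw [hG v u hvu]
  omega

theorem IsPathWithLoops.exists_reach_lit (hG : G.IsPathWithLoops) {x : Fin n → ZMod 2}
    {j : Fin n} (hj : x j = 1) (u : Fin n) (hu : u ≤ j) :
    ∃ y, Relation.ReflTransGen (LitMoveFrom G (u.val + 1)) x y ∧ y u = 1 ∧
      ∀ i : Fin n, i < u → y i = x i := by
  by_cases hxu : x u = 1
  · exact ⟨x, .refl, hxu, fun _ _ => rfl⟩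
  have huj : u < j := lt_of_le_of_ne hu (by rintro rfl; exact hxu hj)
  let v : Fin n := ⟨u.val + 1, by omega⟩
  have hv : v.val = u.val + 1 := rfl
  obtain ⟨y, hxy, hyv, hy⟩ := hG.exists_reach_lit hj v (Fin.le_def.mpr (by omega))
  have hyu : y u = x u := hy u (Fin.lt_def.mpr (by omega))
  refine ⟨y + chi (G.N v), (reflTransGen_litMoveFrom_mono (by omega) hxy).tail
    ⟨v, le_rfl, hyv, rfl⟩, ?_, fun i hi => ?_⟩
  · rw [Pi.add_apply, hG.chi_N_of_succ_eq rfl, hyu, zmod_two_eq_zero_of_ne_one _ hxu, zero_add]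
  · rw [Pi.add_apply, hG.chi_N_of_succ_lt (by omega), add_zero, hy i (hi.trans
      (Fin.lt_def.mpr (by omega)))]
termination_by j.val - u.val

theorem IsPathWithLoops.exists_reach_eq_zero_below_succ (hG : G.IsPathWithLoops) {t : ℕ}
    {x : Fin n → ZMod 2} (hx : ∀ i : Fin n, i.val < t → x i = 0) {j : Fin n} (htj : t < j.val)
    (hj : x j = 1) :
    ∃ y, Relation.ReflTransGen (LitMoveFrom G (t + 1)) x y ∧
      ∀ i : Fin n, i.val < t + 1 → y i = 0 := by
  let u : Fin n := ⟨t, by omega⟩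
  by_cases hxu : x u = 1
  · let v : Fin n := ⟨t + 1, by omega⟩
    have hv : v.val = t + 1 := rfl
    obtain ⟨y, hxy, hyv, hy⟩ := hG.exists_reach_lit hj v (Fin.le_def.mpr htj)
    refine ⟨y + chi (G.N v), (reflTransGen_litMoveFrom_mono (by omega) hxy).tail
      ⟨v, le_rfl, hyv, rfl⟩, fun i hi => ?_⟩
    have hyi : y i = x i := hy i (Fin.lt_def.mpr hi)
    rcases Nat.lt_succ_iff_lt_or_eq.mp hi with hit | hit
    · rw [Pi.add_apply, hG.chi_N_of_succ_lt (by omega), add_zero, hyi, hx i hit]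
    · have hiu : i = u := Fin.ext hit
      subst hiu
      rw [Pi.add_apply, hG.chi_N_of_succ_eq rfl, hyi, hxu]
      decide
  · refine ⟨x, .refl, fun i hi => ?_⟩
    rcases Nat.lt_succ_iff_lt_or_eq.mp hi with hit | hit
    · exact hx i hit
    · exact (Fin.ext hit : i = u) ▸ zmod_two_eq_zero_of_ne_one _ hxu

theorem IsPathWithLoops.exists_reach_L_le_one (hG : G.IsPathWithLoops) (t : ℕ)
    (x : Fin n → ZMod 2) (hx : ∀ i : Fin n, i.val < t → x i = 0) :
    ∃ y, Relation.ReflTransGen (LitMoveFrom G (t + 1)) x y ∧ L y ≤ 1 := by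
  by_cases hlit : ∃ j : Fin n, t < j.val ∧ x j = 1
  · obtain ⟨j, htj, hj⟩ := hlit
    obtain ⟨y, hxy, hy⟩ := hG.exists_reach_eq_zero_below_succ hx htj hj
    obtain ⟨z, hyz, hz⟩ := hG.exists_reach_L_le_one (t + 1) y hy
    exact ⟨z, hxy.trans (reflTransGen_litMoveFrom_mono (by omega) hyz), hz⟩
  · push Not at hlit
    refine ⟨x, .refl, L_le_one_of_lit_eq fun a b ha hb => Fin.ext ?_⟩
    have hlit_eq : ∀ i : Fin n, x i = 1 → i.val = t := fun i hi => by
      by_contra hne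
      rcases Nat.lt_or_gt_of_ne hne with h | h
      · exact absurd (hx i h ▸ hi) zero_ne_one
      · exact hlit i h hi
    rw [hlit_eq a ha, hlit_eq b hb]
termination_by n - t

end Path

end LoopGraph

open LoopGraph in
theorem path_with_loops_litonly_off_first_vertex
    (n : ℕ) (G : LoopGraph (Fin n))
    (hN : ∀ i j : Fin n, i ≠ j →
      (j ∈ G.N i ↔ (i.val + 1 = j.val ∨ j.val + 1 = i.val)))
    (x : Fin n → ZMod 2) :
    ∃ y : Fin n → ZMod 2, L y ≤ 1 ∧
      Relation.ReflTransGen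
        (fun a b => ∃ v : Fin n, 1 ≤ v.val ∧ a v = 1 ∧ b = a + chi (G.N v))
        x y := by
  obtain ⟨y, hxy, hy⟩ := (show G.IsPathWithLoops from hN).exists_reach_L_le_one 0 x
    fun i hi => absurd hi (Nat.not_lt_zero _)
  exact ⟨y, hy, hxy⟩
end

section
/- For any rake G (a graph P_{n,k} with some loops attached) and any configuration x of G, ML*_G(x) ≤ ML_G(x) + 1. -/
/-- Adjacency of the rake `P_{n,k}`. -/
def RakeAdj (n k : ℕ) : (Fin n ⊕ Fin k) → (Fin n ⊕ Fin k) → Prop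
  | Sum.inl i, Sum.inl j => i.val + 1 = j.val ∨ j.val + 1 = i.val
  | Sum.inl i, Sum.inr _ => i.val + 1 = n
  | Sum.inr _, Sum.inl j => j.val + 1 = n
  | Sum.inr _, Sum.inr _ => False


/-!
Every configuration reachable in the regular game is `x + press T` for some press vector `T`.
We realise `T` by valid moves, going along the path from `v_1` towards the leaves. To realise a
press of `v_i`, first bring a light onto `v_i` from `v_i` or farther along the rake, by valid
presses beyond `v_i`; these only change the part of `T` still to be realised. If there is no
light beyond `v_{i-1}`, we stop: the rest of `T` touches no vertex before `v_{i-1}`, so at most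
the light on `v_{i-1}` is lost. At the leaves, press the lit leaves of `T` (they are pairwise
non-adjacent); the other leaves of `T` are dark and touch only themselves and `v_n`.
-/

lemma ZMod.eq_one_of_ne_zero {a : ZMod 2} (h : a ≠ 0) : a = 1 := by
  revert a h
  decide

namespace LoopGraph

section

variable {V : Type} [Fintype V] [DecidableEq V] (G : LoopGraph V)

def press : (V → ZMod 2) →ₗ[ZMod 2] (V → ZMod 2) :=
  Fintype.linearCombination (ZMod 2) fun v => chi (G.N v)

lemma press_single (v : V) : G.press (Pi.single v 1) = chi (G.N v) := by
  rw [press, Fintype.linearCombination_apply_single, one_smul]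

lemma press_chi (D : Finset V) : G.press (chi D) = ∑ v ∈ D, chi (G.N v) := by
  simp only [press, Fintype.linearCombination_apply, chi, ite_smul, one_smul, zero_smul,
    Finset.sum_ite_mem, Finset.univ_inter]

lemma press_apply_eq_zero {T : V → ZMod 2} {u : V} (h : ∀ v, T v ≠ 0 → u ∉ G.N v) :
    G.press T u = 0 := by
  rw [press, Fintype.linearCombination_apply, Finset.sum_apply]
  refine Finset.sum_eq_zero fun v _ => ?_
  by_cases hv : T v = 0
  · simp [hv]
  · simp [chi, h v hv]

lemma add_press_add_press (c T U : V → ZMod 2) :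
    c + G.press U + G.press (T + U) = c + G.press T := by
  have hU : G.press U + G.press U = 0 := funext fun u => CharTwo.add_self_eq_zero (G.press U u)
  rw [map_add, add_comm (G.press T), ← add_assoc, add_assoc c, hU, add_zero]

def ValidReachOn (S : Set V) : (V → ZMod 2) → (V → ZMod 2) → Prop :=
  Relation.ReflTransGen fun x y => ∃ v ∈ S, x v = 1 ∧ y = x + chi (G.N v)

variable {G}

lemma ValidReachOn.validReach {S : Set V} {x y : V → ZMod 2} (h : G.ValidReachOn S x y) :
    G.ValidReach x y :=
  Relation.ReflTransGen.mono (fun _ _ ⟨v, _, hv⟩ => ⟨v, hv⟩) _ _ h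

lemma exists_press_of_reflTransGen {S : Set V} {r : (V → ZMod 2) → (V → ZMod 2) → Prop}
    (hr : ∀ x y, r x y → ∃ v ∈ S, y = x + chi (G.N v)) {x y : V → ZMod 2}
    (h : Relation.ReflTransGen r x y) :
    ∃ U : V → ZMod 2, (∀ v, U v ≠ 0 → v ∈ S) ∧ y = x + G.press U := by
  induction h with
  | refl => exact ⟨0, fun v hv => absurd rfl hv, by simp⟩
  | tail _ hyz ih =>
    obtain ⟨U, hUS, rfl⟩ := ih
    obtain ⟨v, hvS, rfl⟩ := hr _ _ hyz
    refine ⟨U + Pi.single v 1, fun w hw => ?_, by rw [map_add, press_single, add_assoc]⟩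
    by_cases hwv : w = v
    · exact hwv ▸ hvS
    · exact hUS w (by simpa [Pi.single_apply, hwv] using hw)

lemma RegReach.exists_press {x y : V → ZMod 2} (h : G.RegReach x y) :
    ∃ T, y = x + G.press T := by
  obtain ⟨T, -, hT⟩ := exists_press_of_reflTransGen (S := Set.univ)
    (fun _ _ ⟨v, hv⟩ => ⟨v, Set.mem_univ v, hv⟩) h
  exact ⟨T, hT⟩

lemma ValidReachOn.exists_press {S : Set V} {x y : V → ZMod 2} (h : G.ValidReachOn S x y) :
    ∃ U : V → ZMod 2, (∀ v, U v ≠ 0 → v ∈ S) ∧ y = x + G.press U :=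
  exists_press_of_reflTransGen (fun _ _ ⟨v, hvS, _, hv⟩ => ⟨v, hvS, hv⟩) h

lemma exists_validReachOn_lit {S : Set V} {c : V → ZMod 2} {u v : V} (huS : u ∈ S)
    (hu : c u = 1) (hv : v ∈ G.N u) : ∃ c', G.ValidReachOn S c c' ∧ c' v = 1 := by
  by_cases hcv : c v = 1
  · exact ⟨c, Relation.ReflTransGen.refl, hcv⟩
  · refine ⟨c + chi (G.N u), .single ⟨u, huS, hu, rfl⟩, ?_⟩
    have hcv0 : c v = 0 := by_contra fun h => hcv (ZMod.eq_one_of_ne_zero h)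
    simp [chi, hv, hcv0]

lemma validReach_add_press_chi {D : Finset V} {c : V → ZMod 2} (hlit : ∀ v ∈ D, c v = 1)
    (hD : ∀ u ∈ D, ∀ v ∈ D, u ≠ v → u ∉ G.N v) : G.ValidReach c (c + G.press (chi D)) := by
  induction D using Finset.induction_on generalizing c with
  | empty =>
    rw [press_chi, Finset.sum_empty, add_zero]
    exact .refl
  | insert a D ha ih =>
    have hstep : G.ValidReach c (c + chi (G.N a)) := .single ⟨a, hlit a (by simp), rfl⟩
    have hrest := ih (c := c + chi (G.N a)) (fun v hv => ?_)
      fun u hu v hv => hD u (by simp [hu]) v (by simp [hv])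
    · rw [press_chi, Finset.sum_insert ha, ← add_assoc]
      rw [press_chi] at hrest
      exact hstep.trans hrest
    · have hva : v ∉ G.N a := hD v (by simp [hv]) a (by simp) (by rintro rfl; exact ha hv)
      simp [chi, hva, hlit v (by simp [hv])]

lemma L_le_L_add_one {z y : V → ZMod 2} (a : V) (h : ∀ u, u ≠ a → z u = 1 → y u = 1) :
    L z ≤ L y + 1 :=
  calc L z ≤ (insert a (Finset.univ.filter fun u => y u = 1)).card := by
        refine Finset.card_le_card fun u hu => ?_
        rw [Finset.mem_filter] at hu
        by_cases hua : u = a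
        · simp [hua]
        · simp [h u hua hu.2]
    _ ≤ L y + 1 := Finset.card_insert_le _ _

lemma L_le_L_add_press_add_one {c T : V → ZMod 2} (a : V)
    (h : ∀ u, u ≠ a → c u = 1 → ∀ v, T v ≠ 0 → u ∉ G.N v) : L c ≤ L (c + G.press T) + 1 :=
  L_le_L_add_one a fun u hua hu => by
    simp [hu, G.press_apply_eq_zero (h u hua hu)]

variable (G)

def ReachesWithinOne (c y : V → ZMod 2) : Prop :=
  ∃ z, G.ValidReach c z ∧ L z ≤ L y + 1

variable {G}

lemma ReachesWithinOne.of_validReach {c c' y : V → ZMod 2} (h : G.ValidReach c c')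
    (h' : G.ReachesWithinOne c' y) : G.ReachesWithinOne c y :=
  let ⟨z, hz, hL⟩ := h'
  ⟨z, h.trans hz, hL⟩

lemma MLs_le_ML_add_one_of_reachesWithinOne {x : V → ZMod 2}
    (h : ∀ T, G.ReachesWithinOne x (x + G.press T)) : G.MLs x ≤ G.ML x + 1 := by
  obtain ⟨y, hy, hML⟩ := Nat.sInf_mem (⟨L x, x, .refl, rfl⟩ : (L '' {y | G.RegReach x y}).Nonempty)
  obtain ⟨T, rfl⟩ := RegReach.exists_press hy
  obtain ⟨z, hz, hL⟩ := h T
  calc G.MLs x ≤ L z := Nat.sInf_le ⟨z, hz, rfl⟩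
    _ ≤ G.ML x + 1 := by rw [ML, ← hML]; exact hL

end

section

open Sum

variable {n k : ℕ}

def IsRake (G : LoopGraph (Fin n ⊕ Fin k)) : Prop :=
  ∀ u w, u ≠ w → (w ∈ G.N u ↔ RakeAdj n k u w)

/-- As `inl j` is the path vertex `v_{j+1}`, this is `{v_{i+1}, …, v_n}` with all the leaves. -/
def rakeTail (i : ℕ) : Set (Fin n ⊕ Fin k) :=
  {v | Sum.elim (fun j => i ≤ j.val) (fun _ => True) v}

@[simp]
lemma inl_mem_rakeTail {i : ℕ} {j : Fin n} : (inl j : Fin n ⊕ Fin k) ∈ rakeTail i ↔ i ≤ j.val :=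
  Iff.rfl

@[simp]
lemma inr_mem_rakeTail {i : ℕ} {w : Fin k} : (inr w : Fin n ⊕ Fin k) ∈ rakeTail i :=
  trivial

lemma mem_rakeTail_succ_of_ne {i : ℕ} (hi : i < n) {v : Fin n ⊕ Fin k} (hv : v ∈ rakeTail i)
    (hne : v ≠ inl ⟨i, hi⟩) : v ∈ rakeTail (i + 1) := by
  cases v with
  | inl j =>
    have : j.val ≠ i := fun h => hne (congrArg inl (Fin.ext h))
    simp only [inl_mem_rakeTail] at hv ⊢
    omega
  | inr w => exact inr_mem_rakeTail

namespace IsRake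

variable {G : LoopGraph (Fin n ⊕ Fin k)}

lemma inl_mem_N_inl (hG : G.IsRake) {i j : Fin n} (h : i.val + 1 = j.val) :
    (inl i : Fin n ⊕ Fin k) ∈ G.N (inl j) :=
  (hG _ _ fun he => by simp only [inl.injEq, Fin.ext_iff] at he; omega).2 (Or.inr h)

lemma inl_not_mem_N_inl (hG : G.IsRake) {i j : Fin n} (h : i.val + 1 < j.val) :
    (inl i : Fin n ⊕ Fin k) ∉ G.N (inl j) := fun hm => by
  have := (hG _ _ fun he => by simp only [inl.injEq, Fin.ext_iff] at he; omega).1 hm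
  simp only [RakeAdj] at this
  omega

lemma inl_mem_N_inr (hG : G.IsRake) {i : Fin n} (h : i.val + 1 = n) (w : Fin k) :
    (inl i : Fin n ⊕ Fin k) ∈ G.N (inr w) :=
  (hG _ _ (by simp)).2 h

lemma mem_N_inr (hG : G.IsRake) {u : Fin n ⊕ Fin k} {w : Fin k} (hu : u ∈ G.N (inr w)) :
    u = inr w ∨ ∃ j : Fin n, u = inl j ∧ j.val + 1 = n := by
  by_cases huw : inr w = u
  · exact .inl huw.symm
  · have := (hG _ _ huw).1 hu
    cases u with
    | inl j => exact .inr ⟨j, rfl, this⟩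
    | inr w' => exact this.elim

lemma inl_not_mem_N_inr (hG : G.IsRake) {j : Fin n} (h : j.val + 1 ≠ n) (w : Fin k) :
    (inl j : Fin n ⊕ Fin k) ∉ G.N (inr w) := fun hm => by
  rcases hG.mem_N_inr hm with h' | ⟨j', h', hj'⟩
  · exact inl_ne_inr h'
  · exact h (inl_injective h' ▸ hj')

lemma inr_not_mem_N_inr (hG : G.IsRake) {w w' : Fin k} (h : w ≠ w') :
    (inr w : Fin n ⊕ Fin k) ∉ G.N (inr w') := fun hm => by
  rcases hG.mem_N_inr hm with h' | ⟨j, h', -⟩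
  · exact h (inr_injective h')
  · exact inr_ne_inl h'

lemma exists_validReachOn_lit_inl (hG : G.IsRake) {c : Fin n ⊕ Fin k → ZMod 2} {i j : Fin n}
    (hij : i ≤ j) (hc : c (inl j) = 1) :
    ∃ c', G.ValidReachOn (rakeTail (i.val + 1)) c c' ∧ c' (inl i) = 1 := by
  obtain ⟨d, hd⟩ : ∃ d, j.val = i.val + d := ⟨j.val - i.val, by omega⟩
  induction d generalizing j c with
  | zero => exact ⟨c, .refl, (Fin.ext (by omega) : j = i) ▸ hc⟩
  | succ d ih =>
    let j' : Fin n := ⟨i.val + d, by omega⟩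
    obtain ⟨c₁, h₁, hc₁⟩ := exists_validReachOn_lit (S := rakeTail (i.val + 1))
      (by simp only [inl_mem_rakeTail]; omega) hc
      (hG.inl_mem_N_inl (i := j') (by simp only [j']; omega))
    obtain ⟨c', h', hc'⟩ := ih (j := j') (Fin.le_def.2 (by simp only [j']; omega)) hc₁ rfl
    exact ⟨c', h₁.trans h', hc'⟩

lemma exists_validReachOn_lit_of_mem_rakeTail (hG : G.IsRake) {c : Fin n ⊕ Fin k → ZMod 2}
    (i : Fin n) {v : Fin n ⊕ Fin k} (hv : v ∈ rakeTail i.val) (hc : c v = 1) :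
    ∃ c', G.ValidReachOn (rakeTail (i.val + 1)) c c' ∧ c' (inl i) = 1 := by
  cases v with
  | inl j => exact hG.exists_validReachOn_lit_inl hv hc
  | inr w =>
    have hn : 0 < n := i.pos
    let last : Fin n := ⟨n - 1, by omega⟩
    obtain ⟨c₁, h₁, hc₁⟩ := exists_validReachOn_lit (S := rakeTail (i.val + 1)) inr_mem_rakeTail
      hc (hG.inl_mem_N_inr (i := last) (by simp only [last]; omega) w)
    obtain ⟨c', h', hc'⟩ := hG.exists_validReachOn_lit_inl (j := last)
      (Fin.le_def.2 (by simp only [last]; omega)) hc₁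
    exact ⟨c', h₁.trans h', hc'⟩

lemma press_chi_apply_inr (hG : G.IsRake) {D : Finset (Fin n ⊕ Fin k)}
    (hD : ∀ v ∈ D, ∃ w, v = inr w) {w : Fin k} (hw : inr w ∉ D) : G.press (chi D) (inr w) = 0 :=
  G.press_apply_eq_zero fun v hv => by
    have hvD : v ∈ D := by by_contra h; simp [chi, h] at hv
    obtain ⟨w', rfl⟩ := hD v hvD
    exact hG.inr_not_mem_N_inr fun h => hw (h ▸ hvD)

lemma reachesWithinOne_of_forall_inl_eq_zero (hG : G.IsRake) (hn : 1 ≤ n)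
    {c T : Fin n ⊕ Fin k → ZMod 2} (hT : ∀ j : Fin n, T (inl j) = 0) :
    G.ReachesWithinOne c (c + G.press T) := by
  let D := Finset.univ.filter fun v => T v = 1 ∧ c v = 1
  have hD : ∀ v ∈ D, ∃ w, v = inr w := fun v hv => by
    cases v with
    | inl j => simp [D, hT j] at hv
    | inr w => exact ⟨w, rfl⟩
  have hreach : G.ValidReach c (c + G.press (chi D)) :=
    validReach_add_press_chi (fun v hv => (Finset.mem_filter.1 hv).2.2) fun u hu v hv huv => by
      obtain ⟨w, rfl⟩ := hD u hu
      obtain ⟨w', rfl⟩ := hD v hv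
      exact hG.inr_not_mem_N_inr fun h => huv (h ▸ rfl)
  refine .of_validReach hreach ⟨_, .refl, ?_⟩
  rw [← G.add_press_add_press c T (chi D)]
  refine L_le_L_add_press_add_one (inl ⟨n - 1, by omega⟩) fun u hu hcu v hv => ?_
  have hvD : v ∉ D ∧ T v = 1 := by
    by_cases hvD : v ∈ D
    · rw [Pi.add_apply, (Finset.mem_filter.1 hvD).2.1, chi, if_pos hvD] at hv
      exact (hv (by decide)).elim
    · refine ⟨hvD, ZMod.eq_one_of_ne_zero ?_⟩
      simpa [chi, hvD] using hv
  obtain ⟨w, rfl⟩ : ∃ w, v = inr w := by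
    cases v with
    | inl j => simp [hT j] at hvD
    | inr w => exact ⟨w, rfl⟩
  cases u with
  | inl j =>
    exact hG.inl_not_mem_N_inr (fun h => hu (congrArg inl (Fin.ext (by simp only; omega)))) w
  | inr w' =>
    refine hG.inr_not_mem_N_inr fun hww' => hvD.1 ?_
    subst hww'
    simp only [Pi.add_apply, hG.press_chi_apply_inr hD hvD.1, add_zero] at hcu
    simp [D, hvD.2, hcu]

lemma L_le_L_add_press_add_one_of_dark_rakeTail (hG : G.IsRake) {i : ℕ} (hi : i < n)
    {c T : Fin n ⊕ Fin k → ZMod 2} (hT : ∀ v, T v ≠ 0 → v ∈ rakeTail i)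
    (hc : ∀ v ∈ rakeTail i, c v ≠ 1) : L c ≤ L (c + G.press T) + 1 := by
  refine L_le_L_add_press_add_one (inl ⟨i - 1, by omega⟩) fun u hu hcu v hv => ?_
  obtain ⟨j, rfl⟩ : ∃ j, u = inl j := by
    cases u with
    | inl j => exact ⟨j, rfl⟩
    | inr w => exact absurd hcu (hc _ inr_mem_rakeTail)
  have hj : j.val + 1 < i := by
    have h₁ : ¬i ≤ j.val := fun h => hc _ (inl_mem_rakeTail.2 h) hcu
    have h₂ : j.val ≠ i - 1 := fun h => hu (congrArg inl (Fin.ext h))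
    omega
  have hv' := hT v hv
  cases v with
  | inl t => exact hG.inl_not_mem_N_inl (by simp only [inl_mem_rakeTail] at hv'; omega)
  | inr w => exact hG.inl_not_mem_N_inr (by omega) w

lemma reachesWithinOne_of_forall_mem_rakeTail (hG : G.IsRake) (hn : 1 ≤ n) {i : ℕ} (hi : i ≤ n)
    {c T : Fin n ⊕ Fin k → ZMod 2} (hT : ∀ v, T v ≠ 0 → v ∈ rakeTail i) :
    G.ReachesWithinOne c (c + G.press T) := by
  induction hi using Nat.decreasingInduction generalizing c T with
  | self =>
    refine hG.reachesWithinOne_of_forall_inl_eq_zero hn fun j => ?_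
    by_contra h
    have := hT _ h
    simp only [inl_mem_rakeTail] at this
    omega
  | of_succ i hi ih =>
    let vᵢ : Fin n ⊕ Fin k := inl ⟨i, hi⟩
    by_cases hTi : T vᵢ = 0
    · exact ih fun v hv => mem_rakeTail_succ_of_ne hi (hT v hv) (by rintro rfl; exact hv hTi)
    by_cases hlit : ∃ v ∈ rakeTail i, c v = 1
    · obtain ⟨v, hv, hcv⟩ := hlit
      obtain ⟨c₁, h₁, hc₁⟩ := hG.exists_validReachOn_lit_of_mem_rakeTail ⟨i, hi⟩ hv hcv
      obtain ⟨U, hU, rfl⟩ := h₁.exists_press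
      refine .of_validReach (h₁.validReach.trans (.single ⟨vᵢ, hc₁, rfl⟩)) ?_
      rw [← G.add_press_add_press c T U, ← G.add_press_add_press _ (T + U) (Pi.single vᵢ 1),
        press_single]
      refine ih fun v hv => ?_
      by_cases hvi : v = vᵢ
      · subst hvi
        have hUi : U vᵢ = 0 := by_contra fun h => by simpa [vᵢ] using hU _ h
        simp only [Pi.add_apply, ZMod.eq_one_of_ne_zero hTi, hUi, Pi.single_eq_same] at hv
        exact absurd (by decide) hv
      · rw [Pi.add_apply, Pi.single_eq_of_ne hvi, add_zero, Pi.add_apply] at hv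
        by_cases hUv : U v = 0
        · rw [hUv, add_zero] at hv
          exact mem_rakeTail_succ_of_ne hi (hT v hv) hvi
        · simpa using hU v hUv
    · push Not at hlit
      exact ⟨c, .refl, hG.L_le_L_add_press_add_one_of_dark_rakeTail hi hT hlit⟩

end IsRake

end

end LoopGraph

open LoopGraph in
theorem rake_MLs_le_ML_add_one
    (n k : ℕ) (hn : 1 ≤ n) (G : LoopGraph (Fin n ⊕ Fin k))
    (hN : ∀ u w, u ≠ w → (w ∈ G.N u ↔ RakeAdj n k u w))
    (x : (Fin n ⊕ Fin k) → ZMod 2) :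
    G.MLs x ≤ G.ML x + 1 :=
  MLs_le_ML_add_one_of_reachesWithinOne fun _ =>
    IsRake.reachesWithinOne_of_forall_mem_rakeTail hN hn (Nat.zero_le n) fun v _ => by
      cases v <;> simp
end

section
/- Let H be obtained from a tree with at least two vertices by attaching loops at some vertices. Then there exists a path in H containing two different leaves of H and at most one branch vertex of H. -/
/-!
If the tree has no branch vertex, any two distinct leaves will do. Otherwise root the tree at a
vertex `v₀` and take a branch vertex `b` farthest from `v₀`. At least two neighbours of `b` lie away
from `v₀`; extend each of the two edges to a path ending at a leaf. Every vertex on these legs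
other than `b` is farther from `v₀` than `b`, so it is not a branch vertex, and the two leaves
differ because the unique path from `v₀` to either leaf leaves `b` through a different neighbour.
The walk leaf–`b`–leaf then shortens to a path with the same properties.
-/

namespace SimpleGraph

variable {V : Type*} {G : SimpleGraph V}

theorem IsAcyclic.length_eq_dist (hG : G.IsAcyclic) {u v : V} {p : G.Walk u v} (hp : p.IsPath) :
    p.length = G.dist u v := by
  obtain ⟨q, hq, hqd⟩ := p.reachable.exists_path_of_dist
  rw [← hqd, Subtype.mk.inj ((hG.subsingleton_path u v).elim ⟨p, hp⟩ ⟨q, hq⟩)]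

theorem IsAcyclic.length_lt_dist_of_mem_support (hG : G.IsAcyclic) {u v w z : V}
    {p : G.Walk u v} {q : G.Walk v w} (hpq : (p.append q).IsPath) (hz : z ∈ q.support)
    (hzv : z ≠ v) : p.length < G.dist u z := by
  classical
  have hpath : (p.append (q.takeUntil z hz)).IsPath := by
    rw [← q.take_spec hz, Walk.append_assoc] at hpq
    exact hpq.of_append_left
  have hpos : 0 < (q.takeUntil z hz).length :=
    Nat.pos_of_ne_zero fun h => hzv (Walk.eq_of_length_eq_zero h).symm
  rw [← hG.length_eq_dist hpath, Walk.length_append]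
  omega

theorem IsAcyclic.exists_isPath_append_degree_eq_one [Fintype V] [G.LocallyFinite]
    (hG : G.IsAcyclic) {u v : V} (p : G.Walk u v) (hp : p.IsPath) (hnil : ¬p.Nil) :
    ∃ (w : V) (r : G.Walk v w), (p.append r).IsPath ∧ G.degree w = 1 := by
  by_cases hv : G.degree v = 1
  · exact ⟨v, .nil, by simpa using hp, hv⟩
  have hpen : G.Adj v p.penultimate := (p.adj_penultimate hnil).symm
  obtain ⟨y, hy, hyp⟩ : ∃ y ∈ G.neighborFinset v, y ≠ p.penultimate := by
    refine Finset.exists_mem_ne ?_ _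
    have : 0 < G.degree v := G.degree_pos_iff_exists_adj v |>.mpr ⟨_, hpen⟩
    rw [card_neighborFinset_eq_degree]
    omega
  have hadj : G.Adj v y := (G.mem_neighborFinset v y).mp hy
  have hy' : y ∉ p.support := fun h => hyp (hG.eq_penultimate_of_adj_end hp hadj h)
  obtain ⟨w, r, hr, hw⟩ :=
    hG.exists_isPath_append_degree_eq_one (p.concat hadj) (hp.concat hy' hadj)
      (by simp [← Walk.length_eq_zero_iff])
  exact ⟨w, .cons hadj r, by rwa [← Walk.concat_append], hw⟩
termination_by Fintype.card V - p.length
decreasing_by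
  have := (hp.concat hy' hadj).length_lt
  rw [Walk.length_concat] at this ⊢
  omega

theorem IsTree.exists_walk_between_leaves_of_farthest_branch [Fintype V] [G.LocallyFinite]
    (hG : G.IsTree) {v₀ b : V} (hb : 3 ≤ G.degree b)
    (hfar : ∀ z, 3 ≤ G.degree z → G.dist v₀ z ≤ G.dist v₀ b) :
    ∃ (u w : V) (W : G.Walk u w), u ≠ w ∧ G.degree u = 1 ∧ G.degree w = 1 ∧
      ∀ z ∈ W.support, 3 ≤ G.degree z → z = b := by
  classical
  obtain ⟨P, hP, hPdist⟩ := hG.connected.exists_path_of_dist v₀ b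
  have hleg : ∀ c, G.Adj b c → c ≠ P.penultimate → ∃ (w : V) (R : G.Walk b w),
      (P.append R).IsPath ∧ R.snd = c ∧ G.degree w = 1 ∧
        ∀ z ∈ R.support, 3 ≤ G.degree z → z = b := by
    intro c hbc hc
    have hcP : c ∉ P.support := fun h => hc (hG.isAcyclic.eq_penultimate_of_adj_end hP hbc h)
    obtain ⟨w, r, hr, hw⟩ := hG.isAcyclic.exists_isPath_append_degree_eq_one (P.concat hbc)
      (hP.concat hcP hbc) (by simp [← Walk.length_eq_zero_iff])
    rw [Walk.concat_append] at hr
    refine ⟨w, .cons hbc r, hr, Walk.snd_cons r hbc, hw, fun z hz hzdeg => ?_⟩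
    by_contra hzb
    have := hG.isAcyclic.length_lt_dist_of_mem_support hr hz hzb
    have := hfar z hzdeg
    omega
  obtain ⟨c₁, hc₁, c₂, hc₂, hc₁₂⟩ : ∃ c₁ ∈ (G.neighborFinset b).erase P.penultimate,
      ∃ c₂ ∈ (G.neighborFinset b).erase P.penultimate, c₁ ≠ c₂ := by
    refine Finset.one_lt_card.mp ?_
    have := Finset.pred_card_le_card_erase (s := G.neighborFinset b) (a := P.penultimate)
    rw [card_neighborFinset_eq_degree] at this
    omega
  simp only [Finset.mem_erase, mem_neighborFinset] at hc₁ hc₂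
  obtain ⟨w₁, R₁, hR₁, hsnd₁, hw₁, hbranch₁⟩ := hleg c₁ hc₁.2 hc₁.1
  obtain ⟨w₂, R₂, hR₂, hsnd₂, hw₂, hbranch₂⟩ := hleg c₂ hc₂.2 hc₂.1
  refine ⟨w₁, w₂, R₁.reverse.append R₂, ?_, hw₁, hw₂, ?_⟩
  · rintro rfl
    have heq := Subtype.mk.inj ((hG.isAcyclic.subsingleton_path v₀ w₁).elim ⟨_, hR₁⟩ ⟨_, hR₂⟩)
    have := congrArg (·.getVert (P.length + 1)) heq
    simp only [Walk.getVert_append, add_lt_iff_neg_left, not_lt_zero, ↓reduceIte,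
      add_tsub_cancel_left] at this
    exact hc₁₂ (hsnd₁ ▸ hsnd₂ ▸ this)
  · intro z hz
    rw [Walk.mem_support_append_iff, Walk.support_reverse, List.mem_reverse] at hz
    exact hz.elim (hbranch₁ z) (hbranch₂ z)

theorem IsTree.exists_isPath_between_leaves_card_branch_le_one [Fintype V] [DecidableEq V]
    [G.LocallyFinite] [Nontrivial V] (hG : G.IsTree) :
    ∃ (u w : V) (p : G.Walk u w), p.IsPath ∧ u ≠ w ∧ G.degree u = 1 ∧ G.degree w = 1 ∧
      (p.support.toFinset.filter fun v => 3 ≤ G.degree v).card ≤ 1 := by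
  obtain ⟨b, u, w, W, huw, hu, hw, hbranch⟩ : ∃ (b u w : V) (W : G.Walk u w),
      u ≠ w ∧ G.degree u = 1 ∧ G.degree w = 1 ∧ ∀ z ∈ W.support, 3 ≤ G.degree z → z = b := by
    by_cases h : ∃ v₀, 3 ≤ G.degree v₀
    · obtain ⟨v₀, hv₀⟩ := h
      obtain ⟨b, hb, hfar⟩ := Finset.exists_max_image
        (Finset.univ.filter fun z => 3 ≤ G.degree z) (G.dist v₀) ⟨v₀, by simpa using hv₀⟩
      rw [Finset.mem_filter] at hb
      exact ⟨b, hG.exists_walk_between_leaves_of_farthest_branch hb.2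
        fun z hz => hfar z (by simpa using hz)⟩
    · push Not at h
      obtain ⟨u, w, huw, hu, hw⟩ := hG.exists_ne_and_degree_eq_one
      exact ⟨u, u, w, (hG.connected u w).some, huw, hu, hw, fun z _ hz => absurd hz (not_le.mpr (h z))⟩
  refine ⟨u, w, W.bypass, W.bypass_isPath, huw, hu, hw, Finset.card_le_one.mpr ?_⟩
  intro x hx y hy
  rw [Finset.mem_filter, List.mem_toFinset] at hx hy
  exact (hbranch x (W.support_bypass_subset_support hx.1) hx.2).trans
    (hbranch y (W.support_bypass_subset_support hy.1) hy.2).symm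

end SimpleGraph

theorem LoopGraph.deg_eq_degree_simple {V : Type} [Fintype V] [DecidableEq V] (G : LoopGraph V)
    (v : V) [Fintype (G.simple.neighborSet v)] : G.deg v = G.simple.degree v := by
  rw [← SimpleGraph.card_neighborFinset_eq_degree, deg]
  congr 1
  ext w
  rw [Finset.mem_erase, SimpleGraph.mem_neighborFinset]
  exact and_congr_left' ne_comm

open LoopGraph in
theorem tree_path_through_two_leaves_at_most_one_branch
    {V : Type} [Fintype V] [DecidableEq V] (G : LoopGraph V)
    (htree : G.simple.IsTree) (hcard : 2 ≤ Fintype.card V) :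
    ∃ (u w : V) (p : G.simple.Walk u w), p.IsPath ∧ u ≠ w ∧
      G.deg u = 1 ∧ G.deg w = 1 ∧
      (p.support.toFinset.filter fun v => 3 ≤ G.deg v).card ≤ 1 := by
  classical
  have : Nontrivial V := Fintype.one_lt_card_iff_nontrivial.mp hcard
  simp only [deg_eq_degree_simple]
  exact htree.exists_isPath_between_leaves_card_branch_le_one
end

section
/- Let H be obtained from a tree by attaching some loops, and suppose H has at least three leaves. Then for any given leaf u of H, there exists a path in H containing two different leaves of H, containing at most one branch vertex of H, and avoiding u. -/
/-! Take a branch vertex `v` farthest from `u`; one exists by the handshake lemma, since a tree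
with all degrees at most two has at most two leaves, and `v ≠ u`. Rooted at `u`, the vertex `v`
has at least two children. Descending from each of them to a leaf keeps strictly farther from `u`
than `v`, so meets no branch vertex and never `u`, and the two descents are disjoint because in a
tree every walk between two neighbours of `v` passes through `v`. -/

open Finset

namespace LoopGraph

variable {V : Type} [Fintype V] [DecidableEq V]

lemma deg_eq_degree (G : LoopGraph V) [DecidableRel G.simple.Adj] (v : V) :
    G.deg v = G.simple.degree v := by
  rw [← SimpleGraph.card_neighborFinset_eq_degree, deg]
  congr 1
  ext w
  rw [mem_erase, SimpleGraph.mem_neighborFinset]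
  exact and_congr_left' ne_comm

end LoopGraph

namespace SimpleGraph

variable {V : Type*} {G : SimpleGraph V}

lemma Walk.IsPath.append_of_inter {u v w : V} {p : G.Walk u v} {q : G.Walk v w}
    (hp : p.IsPath) (hq : q.IsPath) (hpq : ∀ x ∈ p.support, x ∈ q.support → x = v) :
    (p.append q).IsPath := by
  have hq' := hq.support_nodup
  rw [← q.cons_tail_support, List.nodup_cons] at hq'
  rw [Walk.isPath_def, Walk.support_append, List.nodup_append]
  refine ⟨hp.support_nodup, hq'.2, ?_⟩
  rintro x hx y hy rfl
  rw [hpq x hx (List.mem_of_mem_tail hy)] at hy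
  exact hq'.1 hy

lemma IsAcyclic.mem_support_of_adj_of_adj (hG : G.IsAcyclic) {v w₁ w₂ : V}
    (h₁ : G.Adj v w₁) (h₂ : G.Adj v w₂) (hne : w₁ ≠ w₂) (p : G.Walk w₁ w₂) :
    v ∈ p.support := by
  have hbridge := isBridge_iff_forall_walk_mem_edges.mp
    (isAcyclic_iff_forall_adj_isBridge.mp hG h₁.symm) (p.concat h₂.symm)
  rw [Walk.edges_concat, List.concat_eq_append, List.mem_append, List.mem_singleton] at hbridge
  rcases hbridge with hp | hw
  · exact p.snd_mem_support_of_mem_edges hp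
  · rw [Sym2.eq_iff] at hw
    exact absurd (hw.elim (·.1) fun h => h.1.trans h.2) hne

namespace IsTree

lemma eq_of_adj_of_dist_add_one (hG : G.IsTree) {u x y₁ y₂ : V}
    (h₁ : G.Adj x y₁) (h₂ : G.Adj x y₂)
    (hd₁ : G.dist u y₁ + 1 = G.dist u x) (hd₂ : G.dist u y₂ + 1 = G.dist u x) :
    y₁ = y₂ := by
  classical
  obtain ⟨p, hp, -⟩ := (hG.connected u x).exists_path_of_dist
  have mem_p : ∀ y, G.Adj x y → G.dist u y + 1 = G.dist u x → y ∈ p.support := by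
    intro y hxy hy
    obtain ⟨q, hq, hqy⟩ := (hG.connected u y).exists_path_of_dist
    refine hG.isAcyclic.mem_support_of_ne_mem_support_of_adj_of_isPath hp hq hxy fun hx => ?_
    have := (dist_le (q.takeUntil x hx)).trans (q.length_takeUntil_le_length hx)
    omega
  rw [hG.isAcyclic.eq_penultimate_of_adj_end hp h₁ (mem_p y₁ h₁ hd₁),
    hG.isAcyclic.eq_penultimate_of_adj_end hp h₂ (mem_p y₂ h₂ hd₂)]

variable [Fintype V] [DecidableRel G.Adj]

lemma degree_le_card_children_add_one (hG : G.IsTree) (u x : V) :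
    G.degree x ≤ #{y ∈ G.neighborFinset x | G.dist u y = G.dist u x + 1} + 1 := by
  have hparent : #{y ∈ G.neighborFinset x | ¬G.dist u y = G.dist u x + 1} ≤ 1 := by
    refine card_le_one.mpr fun y₁ hy₁ y₂ hy₂ => ?_
    simp only [mem_filter, mem_neighborFinset] at hy₁ hy₂
    have hd₁ := (hG.dist_eq_dist_add_one_of_adj u hy₁.1).resolve_right hy₁.2
    have hd₂ := (hG.dist_eq_dist_add_one_of_adj u hy₂.1).resolve_right hy₂.2
    exact hG.eq_of_adj_of_dist_add_one hy₁.1 hy₂.1 hd₁.symm hd₂.symm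
  rw [← card_neighborFinset_eq_degree,
    ← card_filter_add_card_filter_not (fun y => G.dist u y = G.dist u x + 1)]
  omega

theorem exists_isPath_to_leaf (hG : G.IsTree) {u w : V} (hw : w ≠ u) :
    ∃ a, G.degree a = 1 ∧ ∃ q : G.Walk w a, q.IsPath ∧
      ∀ x ∈ q.support, G.dist u w ≤ G.dist u x := by
  by_cases hleaf : G.degree w = 1
  · exact ⟨w, hleaf, .nil, .nil, by simp⟩
  have hpos := (hG.connected w u).degree_pos_left hw
  obtain ⟨w', hw'⟩ : {y ∈ G.neighborFinset w | G.dist u y = G.dist u w + 1}.Nonempty := by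
    have := hG.degree_le_card_children_add_one u w
    exact card_pos.mp (by omega)
  rw [mem_filter, mem_neighborFinset] at hw'
  obtain ⟨hww', hdw'⟩ := hw'
  have hw'u : w' ≠ u := by
    rintro rfl
    simp at hdw'
  obtain ⟨a, ha, q, hq, hfar⟩ := hG.exists_isPath_to_leaf hw'u
  refine ⟨a, ha, .cons hww' q, hq.cons fun hwq => ?_, ?_⟩
  · have := hfar w hwq
    omega
  · simp only [Walk.support_cons, List.mem_cons, forall_eq_or_imp, le_refl, true_and]
    intro x hx
    have := hfar x hx
    omega
termination_by Fintype.card V - G.dist u w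
decreasing_by
  obtain ⟨p, hp, hpw⟩ := (hG.connected u w').exists_path_of_dist
  have := hp.length_lt
  omega

theorem exists_isPath_leaves_through (hG : G.IsTree) {u v : V} (hvu : v ≠ u)
    (hv : 3 ≤ G.degree v) :
    ∃ a b : V, ∃ p : G.Walk a b, p.IsPath ∧ a ≠ b ∧ G.degree a = 1 ∧ G.degree b = 1 ∧
      ∀ x ∈ p.support, x = v ∨ G.dist u v < G.dist u x := by
  obtain ⟨w₁, hw₁, w₂, hw₂, hne⟩ :=
    one_lt_card.mp (by have := hG.degree_le_card_children_add_one u v; omega :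
      1 < #{y ∈ G.neighborFinset v | G.dist u y = G.dist u v + 1})
  simp only [mem_filter, mem_neighborFinset] at hw₁ hw₂
  have child_ne_root : ∀ w, G.dist u w = G.dist u v + 1 → w ≠ u := by
    rintro w hw rfl
    simp at hw
  obtain ⟨a, ha, q₁, hq₁, hfar₁⟩ := hG.exists_isPath_to_leaf (child_ne_root w₁ hw₁.2)
  obtain ⟨b, hb, q₂, hq₂, hfar₂⟩ := hG.exists_isPath_to_leaf (child_ne_root w₂ hw₂.2)
  have deep₁ : ∀ x ∈ q₁.support, G.dist u v < G.dist u x := fun x hx => by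
    have := hfar₁ x hx
    omega
  have deep₂ : ∀ x ∈ q₂.support, G.dist u v < G.dist u x := fun x hx => by
    have := hfar₂ x hx
    omega
  have hv₁ : v ∉ q₁.support := fun h => (deep₁ v h).false
  have hv₂ : v ∉ q₂.support := fun h => (deep₂ v h).false
  have hdisj : ∀ x ∈ q₁.support, x ∉ q₂.support := by
    classical
    intro x hx₁ hx₂
    have := hG.isAcyclic.mem_support_of_adj_of_adj hw₁.1 hw₂.1 hne
      ((q₁.takeUntil x hx₁).append (q₂.takeUntil x hx₂).reverse)
    rw [Walk.mem_support_append_iff, Walk.support_reverse, List.mem_reverse] at this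
    exact this.elim (fun h => hv₁ (q₁.support_takeUntil_subset_support hx₁ h))
      (fun h => hv₂ (q₂.support_takeUntil_subset_support hx₂ h))
  refine ⟨a, b, (Walk.cons hw₁.1 q₁).reverse.append (Walk.cons hw₂.1 q₂),
    (hq₁.cons hv₁).reverse.append_of_inter (hq₂.cons hv₂) fun x hx₁ hx₂ => ?_,
    fun hab => hdisj a q₁.end_mem_support (hab ▸ q₂.end_mem_support), ha, hb, fun x hx => ?_⟩
  · simp only [Walk.support_reverse, List.mem_reverse, Walk.support_cons, List.mem_cons] at hx₁ hx₂
    rcases hx₁ with rfl | hx₁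
    · rfl
    · exact hx₂.resolve_right (hdisj x hx₁)
  · simp only [Walk.mem_support_append_iff, Walk.support_reverse, List.mem_reverse,
      Walk.support_cons, List.mem_cons] at hx
    rcases hx with (hx | hx) | (hx | hx)
    exacts [.inl hx, .inr (deep₁ x hx), .inl hx, .inr (deep₂ x hx)]

theorem exists_three_le_degree (hG : G.IsTree) (hleaves : 3 ≤ #{v | G.degree v = 1}) :
    ∃ v, 3 ≤ G.degree v := by
  by_contra! hdeg
  have hsum := G.sum_degrees_eq_twice_card_edges
  have hedges := hG.card_edgeFinset
  have hbound : ∑ v, (G.degree v + if G.degree v = 1 then 1 else 0) ≤ ∑ _v : V, 2 :=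
    sum_le_sum fun v _ => by
      have := hdeg v
      split <;> omega
  rw [sum_add_distrib, ← card_filter, sum_const, card_univ, smul_eq_mul] at hbound
  omega

theorem exists_isPath_leaves_avoiding [DecidableEq V] (hG : G.IsTree)
    (hleaves : 3 ≤ #{v | G.degree v = 1}) {u : V} (hu : G.degree u < 3) :
    ∃ a b : V, ∃ p : G.Walk a b, p.IsPath ∧ a ≠ b ∧ G.degree a = 1 ∧ G.degree b = 1 ∧
      #{x ∈ p.support.toFinset | 3 ≤ G.degree x} ≤ 1 ∧ u ∉ p.support := by
  obtain ⟨v, hv, hfarthest⟩ := exists_max_image {x | 3 ≤ G.degree x} (G.dist u)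
    (by simpa [Finset.Nonempty] using hG.exists_three_le_degree hleaves)
  simp only [mem_filter, mem_univ, true_and] at hv hfarthest
  have hvu : v ≠ u := by
    rintro rfl
    omega
  obtain ⟨a, b, p, hp, hab, ha, hb, hdeep⟩ := hG.exists_isPath_leaves_through hvu hv
  have eq_v : ∀ x ∈ p.support, 3 ≤ G.degree x → x = v := fun x hx hx3 =>
    (hdeep x hx).resolve_right (hfarthest x hx3).not_gt
  refine ⟨a, b, p, hp, hab, ha, hb, card_le_one.mpr fun x hx y hy => ?_, fun hup => ?_⟩
  · simp only [mem_filter, List.mem_toFinset] at hx hy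
    rw [eq_v x hx.1 hx.2, eq_v y hy.1 hy.2]
  · simpa [hvu.symm] using hdeep u hup

end IsTree

end SimpleGraph

open LoopGraph in
theorem tree_path_through_two_leaves_avoiding_a_leaf
    {V : Type} [Fintype V] [DecidableEq V] (G : LoopGraph V)
    (htree : G.simple.IsTree)
    (hleaves : 3 ≤ (Finset.univ.filter fun v => G.deg v = 1).card)
    (u : V) (hu : G.deg u = 1) :
    ∃ (a b : V) (p : G.simple.Walk a b), p.IsPath ∧ a ≠ b ∧
      G.deg a = 1 ∧ G.deg b = 1 ∧
      (p.support.toFinset.filter fun v => 3 ≤ G.deg v).card ≤ 1 ∧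
      u ∉ p.support := by
  classical
  simp only [deg_eq_degree] at hleaves hu ⊢
  exact htree.exists_isPath_leaves_avoiding hleaves (by omega)
end

section
/- Let G be a tree having at least two vertices, such that the set S of branch vertices is nonempty, and let G[S'] be the smallest connected induced subgraph containing all branch vertices. Then G has an appropriate vertex: a vertex v such that at least two components of G[V(G)\{v}] contain no branch vertex of G. -/
section Aux

open SimpleGraph

variable {V : Type} [DecidableEq V]

set_option linter.unusedSectionVars false

/-- A walk avoiding `v` lifts to reachability in the induced graph on `{u | u ≠ v}`. -/
private lemma lift_walk {G : SimpleGraph V} {v : V} :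
    ∀ {a b : V} (p : G.Walk a b), v ∉ p.support →
      ∀ (ha : a ≠ v) (hb : b ≠ v),
        (G.induce {u | u ≠ v}).Reachable ⟨a, ha⟩ ⟨b, hb⟩ := by
  intro a b p
  induction p with
  | nil => intro _ ha hb; exact Reachable.refl _
  | @cons a c b h q ih =>
      intro hp ha hb
      rw [Walk.support_cons, List.mem_cons] at hp
      push_neg at hp
      have hc : c ≠ v := fun hcv => hp.2 (hcv ▸ q.start_mem_support)
      have hadj : (G.induce {u | u ≠ v}).Adj ⟨a, ha⟩ ⟨c, hc⟩ := h
      exact (hadj.reachable).trans (ih hp.2 hc hb)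

/-- In an acyclic graph, two distinct neighbors of `v` are not reachable
from each other in the graph with `v` removed. -/
private lemma neighbors_not_reachable {G : SimpleGraph V} (hac : G.IsAcyclic)
    {v u₁ u₂ : V} (h1 : G.Adj v u₁) (h2 : G.Adj v u₂) (hne : u₁ ≠ u₂)
    (h1v : u₁ ≠ v) (h2v : u₂ ≠ v) :
    ¬ (G.induce {u | u ≠ v}).Reachable ⟨u₁, h1v⟩ ⟨u₂, h2v⟩ := by
  rintro ⟨W⟩
  set p : G.Walk u₁ u₂ := W.map (SimpleGraph.Embedding.induce {u | u ≠ v}).toHom with hpdef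
  have hpv : v ∉ p.support := by
    intro hv
    replace hv : v ∈ W.support.map (SimpleGraph.Embedding.induce (G := G) {u | u ≠ v}).toHom := by
      rw [← Walk.support_map]; exact hv
    rw [List.mem_map] at hv
    obtain ⟨x, _, hx⟩ := hv
    exact x.2 hx
  have hq : v ∉ p.toPath.1.support := fun hv => hpv (p.support_toPath_subset hv)
  have hp1 : (Walk.cons h1 p.toPath.1).IsPath :=
    (Walk.cons_isPath_iff _ _).mpr ⟨p.toPath.2, hq⟩
  have := hac.path_unique ⟨Walk.cons h1 p.toPath.1, hp1⟩ (Path.singleton h2)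
  have hlen : (Walk.cons h1 p.toPath.1).length = (Path.singleton h2).1.length := by
    rw [congrArg (fun q : G.Path v u₂ => q.1.length) this]
  simp [Walk.length_cons, Path.singleton] at hlen
  exact hne (Walk.Nil.eq hlen)

/-- If every walk from `r` to `w` passes through `v`, then `w` is farther from `r`. -/
private lemma dist_lt_of_all_through {G : SimpleGraph V} (hc : G.Connected)
    {r v w : V} (hw : w ≠ v) (hall : ∀ p : G.Walk r w, v ∈ p.support) :
    G.dist r v < G.dist r w := by
  obtain ⟨p, hp⟩ := hc.exists_walk_length_eq_dist r w
  have hv := hall p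
  have hspec := p.take_spec hv
  have hlen : (p.takeUntil v hv).length + (p.dropUntil v hv).length = p.length := by
    conv_rhs => rw [← hspec]
    rw [Walk.length_append]
  have h1 : G.dist r v ≤ (p.takeUntil v hv).length := dist_le _
  have h2 : (p.dropUntil v hv).length ≠ 0 := fun h0 =>
    hw (Walk.eq_of_length_eq_zero h0).symm
  omega

end Aux
open LoopGraph in
theorem tree_with_branch_vertex_has_appropriate_vertex
    {V : Type} [Fintype V] [DecidableEq V] (G : LoopGraph V)
    (htree : G.simple.IsTree) (hbranch : ∃ v : V, 3 ≤ G.deg v) :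
    ∃ v : V, ∃ C D : (G.simple.induce {u : V | u ≠ v}).ConnectedComponent,
      C ≠ D ∧
      (∀ u : {u : V | u ≠ v},
        (G.simple.induce {u : V | u ≠ v}).connectedComponentMk u = C →
          G.deg u.val < 3) ∧
      (∀ u : {u : V | u ≠ v},
        (G.simple.induce {u : V | u ≠ v}).connectedComponentMk u = D →
          G.deg u.val < 3) := by
  classical
  obtain ⟨v₀, hv₀⟩ := hbranch
  have hconn : G.simple.Connected := htree.isConnected
  have hac : G.simple.IsAcyclic := htree.IsAcyclic
  set B : Finset V := Finset.univ.filter (fun x => 3 ≤ G.deg x) with hB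
  have hBne : B.Nonempty := ⟨v₀, by simp [hB, hv₀]⟩
  obtain ⟨v, hvB, hmax⟩ := B.exists_max_image (G.simple.dist v₀) hBne
  have hdegv : 3 ≤ G.deg v := by simpa [hB] using hvB
  have hcard : 2 < ((G.N v).erase v).card := hdegv
  obtain ⟨a, b, c, ha, hb, hc, hab, hac', hbc⟩ := Finset.two_lt_card_iff.mp hcard
  have hadj : ∀ x ∈ (G.N v).erase v, G.simple.Adj v x := by
    intro x hx
    rw [Finset.mem_erase] at hx
    exact ⟨Ne.symm hx.1, hx.2⟩
  have hmem : ∀ x ∈ (G.N v).erase v, x ∈ {u : V | u ≠ v} := by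
    intro x hx
    exact (Finset.mem_erase.mp hx).1
  set H := G.simple.induce {u : V | u ≠ v} with hH
  set Bad : V → Prop := fun x =>
    ∃ w : {u : V | u ≠ v}, 3 ≤ G.deg w.val ∧
      ∃ hx : x ∈ {u : V | u ≠ v},
        H.connectedComponentMk w = H.connectedComponentMk ⟨x, hx⟩ with hBad
  -- any branch vertex (other than v) lies in the same component as v₀
  have key : ∀ (w : {u : V | u ≠ v}), 3 ≤ G.deg w.val →
      ∃ hr : v₀ ∈ {u : V | u ≠ v},
        H.connectedComponentMk w = H.connectedComponentMk ⟨v₀, hr⟩ := by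
    intro w hw3
    by_cases hall : ∀ p : G.simple.Walk v₀ w.val, v ∈ p.support
    · exfalso
      have hlt := dist_lt_of_all_through hconn w.2 hall
      have hle : G.simple.dist v₀ w.val ≤ G.simple.dist v₀ v :=
        hmax w.val (by simp [hB, hw3])
      omega
    · push_neg at hall
      obtain ⟨p, hp⟩ := hall
      have hr : v₀ ≠ v := fun h => hp (h ▸ p.start_mem_support)
      exact ⟨hr, SimpleGraph.ConnectedComponent.sound
        (lift_walk p hp hr w.2).symm⟩
  -- at most one neighbor of v is bad
  have hone : ∀ x y, x ∈ (G.N v).erase v → y ∈ (G.N v).erase v → x ≠ y →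
      Bad x → Bad y → False := by
    intro x y hx hy hxy bx by'
    obtain ⟨w₁, hw₁3, hx', hw₁⟩ := bx
    obtain ⟨w₂, hw₂3, hy', hw₂⟩ := by'
    obtain ⟨hr₁, hk₁⟩ := key w₁ hw₁3
    obtain ⟨hr₂, hk₂⟩ := key w₂ hw₂3
    have hxyc : H.connectedComponentMk ⟨x, hx'⟩ = H.connectedComponentMk ⟨y, hy'⟩ := by
      rw [← hw₁, hk₁, ← hk₂, hw₂]
    have hreach := (SimpleGraph.ConnectedComponent.eq).mp hxyc
    exact neighbors_not_reachable hac (hadj x hx) (hadj y hy) hxy hx' hy' hreach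
  -- finishing move: two good distinct neighbors give the conclusion
  have finish : ∀ x y, x ∈ (G.N v).erase v → y ∈ (G.N v).erase v → x ≠ y →
      ¬ Bad x → ¬ Bad y →
      ∃ v : V, ∃ C D : (G.simple.induce {u : V | u ≠ v}).ConnectedComponent,
        C ≠ D ∧
        (∀ u : {u : V | u ≠ v},
          (G.simple.induce {u : V | u ≠ v}).connectedComponentMk u = C →
            G.deg u.val < 3) ∧
        (∀ u : {u : V | u ≠ v},
          (G.simple.induce {u : V | u ≠ v}).connectedComponentMk u = D →
            G.deg u.val < 3) := by
    intro x y hx hy hxy bx by'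
    refine ⟨v, H.connectedComponentMk ⟨x, hmem x hx⟩,
      H.connectedComponentMk ⟨y, hmem y hy⟩, ?_, ?_, ?_⟩
    · intro hEq
      exact neighbors_not_reachable hac (hadj x hx) (hadj y hy) hxy
        (hmem x hx) (hmem y hy) ((SimpleGraph.ConnectedComponent.eq).mp hEq)
    · intro u hu
      by_contra hdu
      exact bx ⟨u, not_lt.mp hdu, hmem x hx, hu⟩
    · intro u hu
      by_contra hdu
      exact by' ⟨u, not_lt.mp hdu, hmem y hy, hu⟩
  by_cases Ba : Bad a
  · have Bb : ¬ Bad b := fun h => hone a b ha hb hab Ba h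
    have Bc : ¬ Bad c := fun h => hone a c ha hc hac' Ba h
    exact finish b c hb hc hbc Bb Bc
  · by_cases Bb : Bad b
    · have Bc : ¬ Bad c := fun h => hone b c hb hc hbc Bb h
      exact finish a c ha hc hac' Ba Bc
    · exact finish a b ha hb hab Ba Bb
end
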